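/- arXiv:2206.01076 — 4 statements merged into one kernel-verified Lean document; each statement's English description precedes it below -/
import Mathlib

section
/- For δ > -1, the sequence p_i(δ) = (2+δ)·Γ(3+2δ)Γ(i+δ)/(Γ(1+δ)Γ(i+3+2δ)), i ≥ 1, sums to 1, i.e. ∑_{i=1}^∞ p_i(δ) = 1. -/
/-!
Write `b x = Γ x / Γ (x + c)`. The functional equation of `Γ` gives
`b x - b (x + 1) = c Γ x / Γ (x + c + 1)`, so for `x = 1 + δ`, `c = 2 + δ` the series telescopes to
`Γ (3 + 2δ) / Γ (1 + δ) · b (1 + δ) = 1`, provided `b x → 0` as `x → ∞`. That limit comes from the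
log-convexity of `Γ`, which gives `b x ≤ (x - 1) ^ (-c)`.
-/

open Real Filter Topology

theorem hasSum_sub_succ_of_antitone {f : ℕ → ℝ} {l : ℝ} (hf : Antitone f)
    (hl : Tendsto f atTop (𝓝 l)) : HasSum (fun n ↦ f n - f (n + 1)) (f 0 - l) := by
  rw [hasSum_iff_tendsto_nat_of_nonneg (fun n ↦ sub_nonneg.2 (hf n.le_succ))]
  simp only [Finset.sum_range_sub']
  exact tendsto_const_nhds.sub hl

namespace Real

/-- The slope of `log ∘ Γ` on `[x + 1, x + 1 + c]` is at least its slope `log x` on `[x, x + 1]`. -/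
theorem rpow_mul_Gamma_add_one_le {x c : ℝ} (hx : 0 < x) (hc : 0 < c) :
    x ^ c * Gamma (x + 1) ≤ Gamma (x + 1 + c) := by
  have hG : ∀ y, 0 < y → 0 < Gamma y := fun y hy ↦ Gamma_pos_of_pos hy
  have hslope := convexOn_log_Gamma.slope_mono_adjacent (Set.mem_Ioi.2 hx)
    (Set.mem_Ioi.2 (by linarith : 0 < x + 1 + c)) (lt_add_one x) (lt_add_of_pos_right _ hc)
  simp only [Function.comp, Gamma_add_one hx.ne', add_sub_cancel_left, div_one,
    log_mul hx.ne' (hG x hx).ne', add_sub_cancel_right] at hslope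
  rw [le_div_iff₀ hc] at hslope
  rw [← exp_log (hG _ (by linarith : 0 < x + 1 + c)), rpow_def_of_pos hx,
    Gamma_add_one hx.ne', ← exp_log (mul_pos hx (hG x hx)), ← exp_add, exp_le_exp,
    log_mul hx.ne' (hG x hx).ne']
  linarith

theorem Gamma_div_Gamma_add_le_rpow_neg {x c : ℝ} (hx : 1 < x) (hc : 0 < c) :
    Gamma x / Gamma (x + c) ≤ (x - 1) ^ (-c) := by
  have h := rpow_mul_Gamma_add_one_le (sub_pos.2 hx) hc
  rw [sub_add_cancel] at h
  rw [div_le_iff₀ (Gamma_pos_of_pos (by linarith)), rpow_neg (by linarith), inv_mul_eq_div,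
    le_div_iff₀ (rpow_pos_of_pos (by linarith) _), mul_comm]
  exact h

theorem tendsto_Gamma_div_Gamma_add_atTop {c : ℝ} (hc : 0 < c) :
    Tendsto (fun x ↦ Gamma x / Gamma (x + c)) atTop (𝓝 0) := by
  have hbound : Tendsto (fun x : ℝ ↦ (x - 1) ^ (-c)) atTop (𝓝 0) :=
    (tendsto_rpow_neg_atTop hc).comp (tendsto_atTop_add_const_right _ (-1) tendsto_id)
  refine tendsto_of_tendsto_of_tendsto_of_le_of_le' tendsto_const_nhds hbound ?_ ?_
  · filter_upwards [eventually_gt_atTop 0] with x hx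
    exact (div_pos (Gamma_pos_of_pos hx) (Gamma_pos_of_pos (by linarith))).le
  · filter_upwards [eventually_gt_atTop 1] with x hx
    exact Gamma_div_Gamma_add_le_rpow_neg hx hc

theorem Gamma_div_Gamma_add_sub_succ {x c : ℝ} (hx : x ≠ 0) (hxc : 0 < x + c) :
    Gamma x / Gamma (x + c) - Gamma (x + 1) / Gamma (x + 1 + c) =
      c * Gamma x / Gamma (x + c + 1) := by
  have hG := (Gamma_pos_of_pos hxc).ne'
  rw [add_right_comm x 1 c, Gamma_add_one hx, Gamma_add_one hxc.ne']
  field_simp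
  ring

theorem hasSum_Gamma_div_Gamma_add {x c : ℝ} (hx : 0 < x) (hc : 0 < c) :
    HasSum (fun n : ℕ ↦ c * Gamma (n + x) / Gamma (n + x + c + 1)) (Gamma x / Gamma (x + c)) := by
  set b : ℕ → ℝ := fun n ↦ Gamma (n + x) / Gamma (n + x + c)
  have hpos : ∀ n : ℕ, 0 < (n : ℝ) + x := fun n ↦ by positivity
  have hstep : ∀ n, b n - b (n + 1) = c * Gamma (n + x) / Gamma (n + x + c + 1) := fun n ↦ by
    simp only [b, Nat.cast_succ, add_right_comm _ (1 : ℝ) x]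
    exact Gamma_div_Gamma_add_sub_succ (hpos n).ne' (by linarith [hpos n])
  have hanti : Antitone b := antitone_nat_of_succ_le fun n ↦ sub_nonneg.1 <| by
    rw [hstep]
    have := Gamma_pos_of_pos (hpos n)
    have := Gamma_pos_of_pos (by linarith [hpos n] : 0 < (n : ℝ) + x + c + 1)
    positivity
  have hlim : Tendsto b atTop (𝓝 0) := (tendsto_Gamma_div_Gamma_add_atTop hc).comp <|
    tendsto_atTop_add_const_right _ x tendsto_natCast_atTop_atTop
  convert hasSum_sub_succ_of_antitone hanti hlim using 1
  · exact funext fun n ↦ (hstep n).symm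
  · simp [b]

end Real

/-- The limiting PA degree distribution sums to one. -/
theorem pa_pmf_sums_to_one (δ : ℝ) (hδ : -1 < δ) :
    ∑' i : ℕ, (2 + δ) * Gamma (3 + 2*δ) * Gamma (((i:ℝ) + 1) + δ) /
      (Gamma (1 + δ) * Gamma (((i:ℝ) + 1) + 3 + 2*δ)) = 1 := by
  have hx : 0 < 1 + δ := by linarith
  have hsum := (hasSum_Gamma_div_Gamma_add hx (by linarith : 0 < 2 + δ)).mul_left
    (Gamma (3 + 2 * δ) / Gamma (1 + δ))
  have hG₁ := (Gamma_pos_of_pos hx).ne'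
  have hG₂ := (Gamma_pos_of_pos (by linarith : 0 < 3 + 2 * δ)).ne'
  convert hsum.tsum_eq using 1
  · congr 1 with i
    ring_nf
  · rw [show 1 + δ + (2 + δ) = 3 + 2 * δ by ring]
    field_simp
end

section
/- Let ξ_δ(·) be a linear birth-immigration process started at 1 with immigration parameter δ > -1, and let T be an exponential random variable with rate 2+δ, independent of ξ_δ. Then P(ξ_δ(T) = i) = (2+δ)·Γ(3+2δ)Γ(i+δ)/(Γ(1+δ)Γ(i+3+2δ)) for all i ≥ 1. -/
/-!
The product of the exponential density and the birth-process pmf is a constant times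
`exp (-(3+2δ) t) * (1 - exp (-t)) ^ (i-1)`. The substitution `x = exp (-t)` turns its integral
over `(0, ∞)` into the Beta integral `B(3+2δ, i) = Γ(3+2δ) Γ(i) / Γ(i+3+2δ)`, and `Γ(i)` cancels.
-/

open Real MeasureTheory Set

theorem image_exp_neg_Ioi_zero : (fun t : ℝ => exp (-t)) '' Ioi 0 = Ioo 0 1 := by
  ext x
  constructor
  · rintro ⟨t, ht, rfl⟩
    exact ⟨exp_pos _, exp_lt_one_iff.mpr (neg_lt_zero.mpr ht)⟩
  · rintro ⟨hx0, hx1⟩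
    exact ⟨-log x, neg_pos.mpr (log_neg hx0 hx1), by simp [exp_log hx0]⟩

theorem integral_comp_exp_neg_Ioi {E : Type*} [NormedAddCommGroup E] [NormedSpace ℝ E]
    (g : ℝ → E) : ∫ t in Ioi 0, exp (-t) • g (exp (-t)) = ∫ x in Ioo 0 1, g x := by
  rw [← image_exp_neg_Ioi_zero]
  have hderiv (t : ℝ) : HasDerivAt (fun t : ℝ => exp (-t)) (-exp (-t)) t := by
    simpa using (hasDerivAt_neg t).exp
  have hinj : InjOn (fun t : ℝ => exp (-t)) (Ioi 0) :=
    fun s _ t _ h => neg_injective (exp_injective h)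
  simpa [abs_of_pos (exp_pos _)] using (integral_image_eq_integral_abs_deriv_smul
    measurableSet_Ioi (fun t _ => (hderiv t).hasDerivWithinAt) hinj g).symm

theorem integral_Ioo_rpow_mul_one_sub_rpow {a b : ℝ} (ha : 0 < a) (hb : 0 < b) :
    ∫ x in Ioo 0 1, x ^ (a - 1) * (1 - x) ^ (b - 1) = Gamma a * Gamma b / Gamma (a + b) := by
  have hbeta := ProbabilityTheory.beta_eq_betaIntegralReal a b ha hb
  rw [ProbabilityTheory.beta] at hbeta
  rw [hbeta, Complex.betaIntegral, intervalIntegral.integral_of_le zero_le_one,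
    integral_Ioc_eq_integral_Ioo]
  have hcast : ∀ x ∈ Ioo (0 : ℝ) 1, (x : ℂ) ^ ((a : ℂ) - 1) * (1 - (x : ℂ)) ^ ((b : ℂ) - 1)
      = ((x ^ (a - 1) * (1 - x) ^ (b - 1) : ℝ) : ℂ) := fun x hx => by
    rw [Complex.ofReal_mul, Complex.ofReal_cpow hx.1.le, Complex.ofReal_cpow (sub_nonneg.2 hx.2.le)]
    push_cast
    rfl
  rw [setIntegral_congr_fun measurableSet_Ioo hcast, integral_complex_ofReal, Complex.ofReal_re]

theorem integral_exp_mul_one_sub_exp_rpow {a b : ℝ} (ha : 0 < a) (hb : 0 < b) :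
    ∫ t in Ioi 0, exp (-a * t) * (1 - exp (-t)) ^ (b - 1) = Gamma a * Gamma b / Gamma (a + b) := by
  rw [← integral_Ioo_rpow_mul_one_sub_rpow ha hb, ← integral_comp_exp_neg_Ioi]
  refine setIntegral_congr_fun measurableSet_Ioi fun t _ => ?_
  rw [smul_eq_mul, ← exp_mul, ← mul_assoc, ← exp_add]
  ring_nf

/-- Mixing the pmf of a birth-immigration process started at 1 over an independent
exponential time with rate `2+δ` gives the limiting PA degree distribution. -/
theorem birth_immigration_exp_mixture (δ : ℝ) (hδ : -1 < δ) (i : ℕ) (hi : 1 ≤ i) :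
    (∫ t in Set.Ioi (0:ℝ), (2+δ) * exp (-(2+δ)*t) *
        (Gamma ((i:ℝ) + δ) / (Gamma (i:ℝ) * Gamma (1+δ)) *
          exp (-(1+δ)*t) * (1 - exp (-t))^(i-1)))
      = (2+δ) * Gamma (3+2*δ) * Gamma ((i:ℝ)+δ) /
          (Gamma (1+δ) * Gamma ((i:ℝ)+3+2*δ)) := by
  have hi_pos : (0 : ℝ) < i := by exact_mod_cast hi
  have hintegrand (t : ℝ) : (2+δ) * exp (-(2+δ)*t) *
      (Gamma ((i:ℝ) + δ) / (Gamma (i:ℝ) * Gamma (1+δ)) * exp (-(1+δ)*t) * (1 - exp (-t))^(i-1))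
      = (2+δ) * Gamma ((i:ℝ) + δ) / (Gamma (i:ℝ) * Gamma (1+δ)) *
        (exp (-(3+2*δ)*t) * (1 - exp (-t)) ^ ((i:ℝ) - 1)) := by
    rw [← Nat.cast_pred hi, rpow_natCast,
      show -(3+2*δ)*t = -(2+δ)*t + -(1+δ)*t by ring, exp_add]
    ring
  simp_rw [hintegrand]
  rw [integral_const_mul, integral_exp_mul_one_sub_exp_rpow (by linarith) hi_pos,
    show 3 + 2*δ + i = i + 3 + 2*δ by ring]
  have hGamma_i : Gamma (i:ℝ) ≠ 0 := (Gamma_pos_of_pos hi_pos).ne'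
  field_simp
end

section
/- Let ξ^j_δ(t) be a linear birth-immigration process with immigration parameter δ ≥ 0 started at j ≥ 1. For all integers i > j and all t ≥ 0, P(ξ^{j+1}_δ(t) > i) = P(ξ^j_δ(t) > i) + ((i+δ)/(j+δ))·P(ξ^j_δ(t) = i). -/
/-!
Write `s = j + δ`, `u = 1 - e^{-t}` and `i = j + 1 + n`. Since `e^{-st} = (1 - u)^s`, the
functional equation `Γ(x + 1) = x Γ(x)` turns the recursion, after clearing the common factor
`Γ(i + 1 + δ) / (Γ(n + 1) Γ(s))`, into the integration by parts identity
`(n + 1) ∫₀ᵘ xⁿ (1 - x)^s = u^{n+1} (1 - u)^s + s ∫₀ᵘ x^{n+1} (1 - x)^{s-1}`.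
-/

open Real MeasureTheory

/-- Pmf of a linear birth-immigration process `ξ^j_δ(t)` started at `j`. -/
noncomputable def birthPMF (δ : ℝ) (j i : ℕ) (t : ℝ) : ℝ :=
  Gamma ((i:ℝ) + δ) / (Gamma ((i:ℝ) - (j:ℝ) + 1) * Gamma ((j:ℝ) + δ)) *
    exp (-((j:ℝ) + δ) * t) * (1 - exp (-t))^(i - j)

/-- Tail of a linear birth-immigration process `ξ^j_δ(t)` started at `j`. -/
noncomputable def birthTail (δ : ℝ) (j i : ℕ) (t : ℝ) : ℝ :=
  Gamma ((i:ℝ) + 1 + δ) / (Gamma ((i:ℝ) - (j:ℝ) + 1) * Gamma ((j:ℝ) + δ)) *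
    ∫ x in (0:ℝ)..(1 - exp (-t)), x^(i - j) * (1 - x) ^ ((j:ℝ) - 1 + δ)

lemma one_sub_pos_of_mem_uIcc {u x : ℝ} (hu : u < 1) (hx : x ∈ Set.uIcc 0 u) : 0 < 1 - x :=
  sub_pos.2 (hx.2.trans_lt (max_lt one_pos hu))

lemma intervalIntegrable_pow_mul_one_sub_rpow (n : ℕ) (s : ℝ) {u : ℝ} (hu : u < 1) :
    IntervalIntegrable (fun x : ℝ => x ^ n * (1 - x) ^ s) volume 0 u :=
  ((continuousOn_pow n).mul ((continuousOn_const.sub continuousOn_id).rpow_const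
    fun _ hx => Or.inl (one_sub_pos_of_mem_uIcc hu hx).ne')).intervalIntegrable

lemma integral_pow_mul_one_sub_rpow_by_parts (n : ℕ) (s : ℝ) {u : ℝ} (hu : u < 1) :
    ((n:ℝ) + 1) * ∫ x in (0:ℝ)..u, x ^ n * (1 - x) ^ s
      = u ^ (n + 1) * (1 - u) ^ s + s * ∫ x in (0:ℝ)..u, x ^ (n + 1) * (1 - x) ^ (s - 1) := by
  have hI₁ := intervalIntegrable_pow_mul_one_sub_rpow n s hu
  have hI₂ := intervalIntegrable_pow_mul_one_sub_rpow (n + 1) (s - 1) hu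
  have hderiv : ∀ x ∈ Set.uIcc (0:ℝ) u, HasDerivAt (fun y : ℝ => y ^ (n + 1) * (1 - y) ^ s)
      (((n:ℝ) + 1) * (x ^ n * (1 - x) ^ s) - s * (x ^ (n + 1) * (1 - x) ^ (s - 1))) x := by
    intro x hx
    have hpow : HasDerivAt (fun y : ℝ => y ^ (n + 1)) (((n:ℝ) + 1) * x ^ n) x := by
      simpa using hasDerivAt_pow (n + 1) x
    have hrpow : HasDerivAt (fun y : ℝ => (1 - y) ^ s) (s * (1 - x) ^ (s - 1) * (-1)) x :=
      (hasDerivAt_rpow_const (Or.inl (one_sub_pos_of_mem_uIcc hu hx).ne')).comp x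
        ((hasDerivAt_id x).const_sub 1)
    exact (hpow.mul hrpow).congr_deriv (by ring)
  have hftc := intervalIntegral.integral_eq_sub_of_hasDerivAt hderiv
    ((hI₁.const_mul _).sub (hI₂.const_mul _))
  rw [intervalIntegral.integral_sub (hI₁.const_mul _) (hI₂.const_mul _),
    intervalIntegral.integral_const_mul, intervalIntegral.integral_const_mul] at hftc
  rw [zero_pow n.succ_ne_zero, zero_mul, sub_zero] at hftc
  linarith

theorem birth_tail_recursion_general (δ : ℝ) (hδ : 0 ≤ δ) (j i : ℕ) (hj : 1 ≤ j)
    (hij : j < i) (t : ℝ) :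
    birthTail δ (j+1) i t
      = birthTail δ j i t + (((i:ℝ) + δ) / ((j:ℝ) + δ)) * birthPMF δ j i t := by
  obtain ⟨n, rfl⟩ : ∃ n, i = j + 1 + n := ⟨i - (j + 1), by omega⟩
  unfold birthTail birthPMF
  rw [show j + 1 + n - (j + 1) = n by omega, show j + 1 + n - j = n + 1 by omega]
  push_cast
  set s : ℝ := j + δ
  have hs : 0 < s := by
    have : (1:ℝ) ≤ j := by exact_mod_cast hj
    linarith
  have hparts := integral_pow_mul_one_sub_rpow_by_parts n s (sub_lt_self 1 (exp_pos (-t)))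
  rw [sub_sub_cancel] at hparts
  rw [show -s * t = -t * s by ring, exp_mul,
    show (j:ℝ) + 1 + n + 1 + δ = (j + 1 + n + δ) + 1 by ring,
    show (j:ℝ) + 1 + δ = s + 1 by ring, show (j:ℝ) + 1 + n - j + 1 = (n + 1) + 1 by ring,
    show (j:ℝ) + 1 + n - (j + 1) + 1 = n + 1 by ring,
    show (j:ℝ) + 1 - 1 + δ = s by ring, show (j:ℝ) - 1 + δ = s - 1 by ring,
    Gamma_add_one (s := (j:ℝ) + 1 + n + δ) (by positivity), Gamma_add_one hs.ne',
    Gamma_add_one (s := (n:ℝ) + 1) (by positivity)]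
  have hΓs := Gamma_pos_of_pos hs
  have hΓn := Gamma_pos_of_pos (show (0:ℝ) < n + 1 by positivity)
  field_simp
  linear_combination hparts

/-- `P(ξ^{j+1}_δ(t) > i) = P(ξ^j_δ(t) > i) + ((i+δ)/(j+δ))·P(ξ^j_δ(t) = i)`. -/
theorem birth_tail_recursion (δ : ℝ) (hδ : 0 ≤ δ) (j i : ℕ) (hj : 1 ≤ j)
    (hij : j < i) (t : ℝ) (ht : 0 ≤ t) :
    birthTail δ (j+1) i t
      = birthTail δ j i t + (((i:ℝ) + δ) / ((j:ℝ) + δ)) * birthPMF δ j i t :=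
  birth_tail_recursion_general δ hδ j i hj hij t
end

section
/- Define U(λ; δ) = ∑_{i=1}^∞ p_{>i}(δ)/(i+λ) − 1/(2+λ) for λ, δ > -1, where p_{>i}(δ) = Γ(3+2δ)Γ(i+1+δ)/(Γ(1+δ)Γ(i+3+2δ)). Then U(λ; δ) has a unique zero at λ = δ: it is strictly positive for λ < δ and strictly negative for λ > δ. -/
/-!
Let `T_δ(n) = ∑_{j>n} p_{>j}(δ) = ∏_{k<n} (k+2+δ)/(k+3+2δ)`; its factors are strictly
decreasing in `δ`. The identity `(2+δ) p_{>i+1}(δ)/(i+1+δ) = p_{>i}(δ) - p_{>i+1}(δ)`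
telescopes to `∑_i p_{>i}(δ)/(i+δ) = 1/(2+δ)`, so
`U(λ;δ) = ∑_i (p_{>i}(δ) - p_{>i}(λ))/(i+λ)`. Summation by parts turns this into
`∑_{i≥0} (w_i - w_{i+1}) (T_λ(i+1) - T_δ(i+1))` with `w_i = 1/(i+1+λ)` decreasing, and every
term has the sign of `δ - λ`.
-/

open Real

/-- Limiting PA degree tail `p_{>i}(δ)`. -/
noncomputable def pGt (δ : ℝ) (i : ℕ) : ℝ :=
  Gamma (3+2*δ) * Gamma ((i:ℝ)+1+δ) / (Gamma (1+δ) * Gamma ((i:ℝ)+3+2*δ))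

/-- Limit of the normalized score function of the PA(δ) likelihood. -/
noncomputable def Uscore (lam δ : ℝ) : ℝ :=
  (∑' i : ℕ, pGt δ (i+1) / (((i:ℝ) + 1) + lam)) - 1/(2+lam)


open Filter Topology Finset

theorem tsum_mul_sub_eq_tsum_sub_mul {R : Type*} [Ring R] [TopologicalSpace R]
    [IsTopologicalRing R] [T2Space R] {w a : ℕ → R}
    (hlhs : Summable fun i => w i * (a (i + 1) - a i))
    (hrhs : Summable fun i => (w i - w (i + 1)) * a (i + 1))
    (hlim : Tendsto (fun n => w n * a n) atTop (𝓝 0)) :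
    ∑' i, w i * (a (i + 1) - a i) = ∑' i, (w i - w (i + 1)) * a (i + 1) - w 0 * a 0 := by
  have partial_sums : ∀ n, ∑ i ∈ range n, w i * (a (i + 1) - a i) =
      ∑ i ∈ range n, (w i - w (i + 1)) * a (i + 1) + w n * a n - w 0 * a 0 := by
    intro n
    induction n with
    | zero => simp
    | succ n ih =>
      rw [sum_range_succ, sum_range_succ, ih]
      noncomm_ring
  have hlim' := (hrhs.hasSum.tendsto_sum_nat.add hlim).sub_const (w 0 * a 0)
  rw [add_zero] at hlim'
  exact tendsto_nhds_unique hlhs.hasSum.tendsto_sum_nat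
    (hlim'.congr fun n => (partial_sums n).symm)

theorem Antitone.hasSum_sub_succ {f : ℕ → ℝ} {l : ℝ} (hf : Antitone f)
    (hlim : Tendsto f atTop (𝓝 l)) : HasSum (fun i => f i - f (i + 1)) (f 0 - l) := by
  rw [hasSum_iff_tendsto_nat_of_nonneg fun i => sub_nonneg.2 (hf i.le_succ)]
  simpa only [sum_range_sub'] using tendsto_const_nhds.sub hlim

theorem Summable.mul_right_of_abs_le {ι : Type*} {f g : ι → ℝ} {C : ℝ} (hf : Summable f)
    (hg : ∀ i, |g i| ≤ C) : Summable fun i => f i * g i :=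
  .of_norm_bounded (hf.abs.mul_right C) fun i => by
    rw [norm_mul, Real.norm_eq_abs, Real.norm_eq_abs]
    exact mul_le_mul_of_nonneg_left (hg i) (abs_nonneg _)

variable {lam δ : ℝ}

noncomputable def scoreWeight (lam : ℝ) (i : ℕ) : ℝ := ((i : ℝ) + 1 + lam)⁻¹

theorem scoreWeight_antitone (hl : -1 < lam) : Antitone (scoreWeight lam) :=
  antitone_nat_of_succ_le fun i => by
    unfold scoreWeight
    push_cast
    gcongr
    · linarith [(i.cast_nonneg : (0 : ℝ) ≤ i)]
    · linarith

theorem scoreWeight_sub_succ_pos (hl : -1 < lam) (i : ℕ) :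
    0 < scoreWeight lam i - scoreWeight lam (i + 1) := by
  have hi : (0 : ℝ) ≤ i := i.cast_nonneg
  unfold scoreWeight
  push_cast
  rw [sub_pos]
  gcongr
  · linarith
  · linarith

theorem tendsto_scoreWeight (lam : ℝ) : Tendsto (scoreWeight lam) atTop (𝓝 0) :=
  (tendsto_atTop_add_const_right _ _ (tendsto_atTop_add_const_right _ 1
    tendsto_natCast_atTop_atTop)).inv_tendsto_atTop

theorem summable_scoreWeight_sub_succ (hl : -1 < lam) :
    Summable fun i => scoreWeight lam i - scoreWeight lam (i + 1) :=
  ((scoreWeight_antitone hl).hasSum_sub_succ (tendsto_scoreWeight lam)).summable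

theorem pGt_zero (hδ : -1 < δ) : pGt δ 0 = 1 := by
  have h1 : Gamma (1 + δ) ≠ 0 := (Gamma_pos_of_pos (by linarith)).ne'
  have h3 : Gamma (3 + 2 * δ) ≠ 0 := (Gamma_pos_of_pos (by linarith)).ne'
  simp only [pGt, Nat.cast_zero, zero_add]
  field_simp

theorem pGt_succ (hδ : -1 < δ) (n : ℕ) :
    pGt δ (n + 1) = pGt δ n * (((n : ℝ) + 1 + δ) / ((n : ℝ) + 3 + 2 * δ)) := by
  have hn : (0 : ℝ) ≤ n := n.cast_nonneg
  have hA : 0 < (n : ℝ) + 1 + δ := by linarith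
  have hC : 0 < (n : ℝ) + 3 + 2 * δ := by linarith
  have h1 : Gamma (1 + δ) ≠ 0 := (Gamma_pos_of_pos (by linarith)).ne'
  have hGC : Gamma ((n : ℝ) + 3 + 2 * δ) ≠ 0 := (Gamma_pos_of_pos hC).ne'
  have eA : Gamma (((n + 1 : ℕ) : ℝ) + 1 + δ) =
      ((n : ℝ) + 1 + δ) * Gamma ((n : ℝ) + 1 + δ) := by
    rw [← Gamma_add_one hA.ne']; push_cast; ring_nf
  have eC : Gamma (((n + 1 : ℕ) : ℝ) + 3 + 2 * δ) =
      ((n : ℝ) + 3 + 2 * δ) * Gamma ((n : ℝ) + 3 + 2 * δ) := by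
    rw [← Gamma_add_one hC.ne']; push_cast; ring_nf
  rw [pGt, pGt, eA, eC]
  field_simp

theorem pGt_pos (hδ : -1 < δ) (n : ℕ) : 0 < pGt δ n := by
  have hn : (0 : ℝ) ≤ n := n.cast_nonneg
  have := Gamma_pos_of_pos (show 0 < (n : ℝ) + 1 + δ by linarith)
  have := Gamma_pos_of_pos (show 0 < (n : ℝ) + 3 + 2 * δ by linarith)
  have := Gamma_pos_of_pos (show 0 < 1 + δ by linarith)
  have := Gamma_pos_of_pos (show 0 < 3 + 2 * δ by linarith)
  unfold pGt
  positivity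

theorem pGt_antitone (hδ : -1 < δ) : Antitone (pGt δ) :=
  antitone_nat_of_succ_le fun n => by
    have hn : (0 : ℝ) ≤ n := n.cast_nonneg
    rw [pGt_succ hδ]
    exact mul_le_of_le_one_right (pGt_pos hδ n).le
      ((div_le_one (by linarith)).2 (by linarith))

/-- The tail sum `∑_{j>n} p_{>j}(δ)`, see `pGt_succ_eq_pGtTail_sub`. -/
noncomputable def pGtTail (δ : ℝ) (n : ℕ) : ℝ :=
  ∏ k ∈ range n, ((k : ℝ) + 2 + δ) / ((k : ℝ) + 3 + 2 * δ)

theorem pGtTail_pos (hδ : -1 < δ) (n : ℕ) : 0 < pGtTail δ n :=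
  prod_pos fun k _ => by
    have hk : (0 : ℝ) ≤ k := k.cast_nonneg
    exact div_pos (by linarith) (by linarith)

theorem pGtTail_le_one (hδ : -1 < δ) (n : ℕ) : pGtTail δ n ≤ 1 :=
  prod_le_one (fun k _ => (by
      have hk : (0 : ℝ) ≤ k := k.cast_nonneg
      exact div_nonneg (by linarith) (by linarith)))
    fun k _ => by
      have hk : (0 : ℝ) ≤ k := k.cast_nonneg
      exact (div_le_one (by linarith)).2 (by linarith)

theorem pGtTail_succ (n : ℕ) :
    pGtTail δ (n + 1) = pGtTail δ n * (((n : ℝ) + 2 + δ) / ((n : ℝ) + 3 + 2 * δ)) :=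
  prod_range_succ _ _

theorem pGtTail_antitone (hδ : -1 < δ) : Antitone (pGtTail δ) :=
  antitone_nat_of_succ_le fun n => by
    have hn : (0 : ℝ) ≤ n := n.cast_nonneg
    rw [pGtTail_succ]
    exact mul_le_of_le_one_right (pGtTail_pos hδ n).le
      ((div_le_one (by linarith)).2 (by linarith))

theorem pGt_succ_eq_pGtTail_mul (hδ : -1 < δ) (n : ℕ) :
    pGt δ (n + 1) = pGtTail δ n * ((1 + δ) / ((n : ℝ) + 3 + 2 * δ)) := by
  induction n with
  | zero => simp [pGt_succ hδ, pGt_zero hδ, pGtTail]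
  | succ n ih =>
    have hn : (0 : ℝ) ≤ n := n.cast_nonneg
    have hC : (n : ℝ) + 3 + 2 * δ ≠ 0 := by linarith
    rw [pGt_succ hδ, ih, pGtTail_succ]
    push_cast
    field_simp
    ring

theorem pGt_succ_eq_pGtTail_sub (hδ : -1 < δ) (n : ℕ) :
    pGt δ (n + 1) = pGtTail δ n - pGtTail δ (n + 1) := by
  have hn : (0 : ℝ) ≤ n := n.cast_nonneg
  have hC : (n : ℝ) + 3 + 2 * δ ≠ 0 := by linarith
  rw [pGt_succ_eq_pGtTail_mul hδ, pGtTail_succ, eq_sub_iff_add_eq, ← mul_add, ← add_div,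
    show 1 + δ + ((n : ℝ) + 2 + δ) = (n : ℝ) + 3 + 2 * δ by ring, div_self hC, mul_one]

theorem summable_pGt_succ (hδ : -1 < δ) : Summable fun n => pGt δ (n + 1) := by
  have hT := pGtTail_antitone hδ
  have hbdd : BddBelow (Set.range (pGtTail δ)) :=
    ⟨0, Set.forall_mem_range.2 fun n => (pGtTail_pos hδ n).le⟩
  simpa only [← pGt_succ_eq_pGtTail_sub hδ] using
    (hT.hasSum_sub_succ (tendsto_atTop_ciInf hT hbdd)).summable

theorem tendsto_pGt (hδ : -1 < δ) : Tendsto (pGt δ) atTop (𝓝 0) :=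
  (tendsto_add_atTop_iff_nat 1).1 (summable_pGt_succ hδ).tendsto_atTop_zero

theorem hasSum_pGt_succ_div_self (hδ : -1 < δ) :
    HasSum (fun i : ℕ => pGt δ (i + 1) / ((i : ℝ) + 1 + δ)) (1 / (2 + δ)) := by
  have htel := ((pGt_antitone hδ).hasSum_sub_succ (tendsto_pGt hδ)).div_const (2 + δ)
  rw [pGt_zero hδ, sub_zero] at htel
  refine htel.congr_fun fun i => ?_
  have hi : (0 : ℝ) ≤ i := i.cast_nonneg
  have hA : (i : ℝ) + 1 + δ ≠ 0 := by linarith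
  have hC : (i : ℝ) + 3 + 2 * δ ≠ 0 := by linarith
  have h2 : 2 + δ ≠ 0 := by linarith
  rw [pGt_succ hδ, ← mul_one_sub, one_sub_div hC,
    show (i : ℝ) + 3 + 2 * δ - ((i : ℝ) + 1 + δ) = 2 + δ by ring]
  field_simp

theorem pGtTail_lt_of_lt (hl : -1 < lam) (h : lam < δ) (n : ℕ) :
    pGtTail δ (n + 1) < pGtTail lam (n + 1) := by
  refine prod_lt_prod (fun k _ => ?_) (fun k _ => ?_) ⟨0, by simp, ?_⟩
  · have hk : (0 : ℝ) ≤ k := k.cast_nonneg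
    exact div_pos (by linarith) (by linarith)
  · have hk : (0 : ℝ) ≤ k := k.cast_nonneg
    rw [div_le_div_iff₀ (by linarith) (by linarith)]
    nlinarith
  · simp only [Nat.cast_zero, zero_add]
    rw [div_lt_div_iff₀ (by linarith) (by linarith)]
    nlinarith

theorem abs_pGtTail_sub_le_one (hl : -1 < lam) (hδ : -1 < δ) (n : ℕ) :
    |pGtTail lam n - pGtTail δ n| ≤ 1 :=
  abs_sub_le_of_nonneg_of_le (pGtTail_pos hl n).le (pGtTail_le_one hl n)
    (pGtTail_pos hδ n).le (pGtTail_le_one hδ n)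

theorem summable_pGt_succ_div (hl : -1 < lam) (hδ : -1 < δ) :
    Summable fun i : ℕ => pGt δ (i + 1) / ((i : ℝ) + 1 + lam) :=
  (summable_pGt_succ hδ).mul_right_of_abs_le (C := (1 + lam)⁻¹) fun i => by
    have hi : (0 : ℝ) ≤ i := i.cast_nonneg
    rw [abs_of_pos (inv_pos.2 (by linarith))]
    gcongr
    · linarith
    · linarith

theorem summable_scoreWeight_sub_succ_mul (hl : -1 < lam) (hδ : -1 < δ) :
    Summable fun i => (scoreWeight lam i - scoreWeight lam (i + 1)) *
      (pGtTail lam (i + 1) - pGtTail δ (i + 1)) :=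
  (summable_scoreWeight_sub_succ hl).mul_right_of_abs_le fun i =>
    abs_pGtTail_sub_le_one hl hδ (i + 1)

theorem Uscore_eq_tsum (hl : -1 < lam) (hδ : -1 < δ) :
    Uscore lam δ = ∑' i, (scoreWeight lam i - scoreWeight lam (i + 1)) *
      (pGtTail lam (i + 1) - pGtTail δ (i + 1)) := by
  set D : ℕ → ℝ := fun n => pGtTail lam n - pGtTail δ n
  have hδsum := summable_pGt_succ_div hl hδ
  have hlsum := summable_pGt_succ_div hl hl
  have hterm : ∀ i : ℕ,
      pGt δ (i + 1) / ((i : ℝ) + 1 + lam) - pGt lam (i + 1) / ((i : ℝ) + 1 + lam) =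
        scoreWeight lam i * (D (i + 1) - D i) := fun i => by
    simp only [D, scoreWeight, pGt_succ_eq_pGtTail_sub hδ, pGt_succ_eq_pGtTail_sub hl]
    ring
  have hbdry : Tendsto (fun n => scoreWeight lam n * D n) atTop (𝓝 0) :=
    (tendsto_scoreWeight lam).zero_mul_isBoundedUnder_le
      (isBoundedUnder_of ⟨1, fun n => abs_pGtTail_sub_le_one hl hδ n⟩)
  rw [Uscore, ← (hasSum_pGt_succ_div_self hl).tsum_eq, ← hδsum.tsum_sub hlsum,
    tsum_congr hterm,
    tsum_mul_sub_eq_tsum_sub_mul ((hδsum.sub hlsum).congr hterm)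
      (summable_scoreWeight_sub_succ_mul hl hδ) hbdry]
  simp [D, pGtTail]

/-- `U(·; δ)` has a unique zero at `δ`: positive before, negative after. -/
theorem score_limit_unique_zero (lam δ : ℝ) (hl : -1 < lam) (hδ : -1 < δ) :
    (lam < δ → 0 < Uscore lam δ) ∧ (δ < lam → Uscore lam δ < 0) ∧ Uscore δ δ = 0 := by
  have hsum := summable_scoreWeight_sub_succ_mul hl hδ
  refine ⟨fun h => ?_, fun h => ?_, ?_⟩
  · have hpos : ∀ i, 0 < (scoreWeight lam i - scoreWeight lam (i + 1)) *
        (pGtTail lam (i + 1) - pGtTail δ (i + 1)) := fun i =>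
      mul_pos (scoreWeight_sub_succ_pos hl i) (sub_pos.2 (pGtTail_lt_of_lt hl h i))
    rw [Uscore_eq_tsum hl hδ]
    exact hsum.tsum_pos (fun i => (hpos i).le) 0 (hpos 0)
  · have hneg : ∀ i, (scoreWeight lam i - scoreWeight lam (i + 1)) *
        (pGtTail lam (i + 1) - pGtTail δ (i + 1)) < 0 := fun i =>
      mul_neg_of_pos_of_neg (scoreWeight_sub_succ_pos hl i)
        (sub_neg.2 (pGtTail_lt_of_lt hδ h i))
    rw [Uscore_eq_tsum hl hδ, ← tsum_zero]
    exact hsum.tsum_lt_tsum (fun i => (hneg i).le) (hneg 0) summable_zero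
  · rw [Uscore, (hasSum_pGt_succ_div_self hδ).tsum_eq, sub_self]
end
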